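/- Let 𝒞 be a model category. Suppose given morphisms f : A → B, g : A → C and f′ : A′ → B′, g′ : A′ → C′ together with weak equivalences u : B → B′, v : A → A′, w : C → C′, such that all six objects A, B, C, A′, B′, C′ are cofibrant, f and f′ are cofibrations, u ∘ f is left homotopic to f′ ∘ v, and w ∘ g is left homotopic to g′ ∘ v. Then the pushout B ⨿_A C of (f, g) and the pushout B′ ⨿_{A′} C′ of (f′, g′) are connected by a zig-zag of weak equivalences; in particular their images under the localization functor of 𝒞 at the weak equivalences are isomorphic. -/

import Mathlib

open CategoryTheory CategoryTheory.Limits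

universe v u

/-- `f` is a retract of `g` (in the arrow category). -/
def IsRetractOf {C : Type u} [Category.{v} C] {X Y Z W : C}
    (f : X ⟶ Y) (g : Z ⟶ W) : Prop :=
  ∃ (i : X ⟶ Z) (r : Z ⟶ X) (i' : Y ⟶ W) (r' : W ⟶ Y),
    i ≫ r = 𝟙 X ∧ i' ≫ r' = 𝟙 Y ∧ i ≫ g = f ≫ i' ∧ g ≫ r' = r ≫ f

/-- A (Quillen) model structure on a category with finite limits and colimits:
classes of weak equivalences, cofibrations and fibrations such that weak equivalences
satisfy two-out-of-three, all three classes are closed under retracts, cofibrations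
(resp. trivial cofibrations) have the left lifting property against trivial fibrations
(resp. fibrations), and every morphism factors as a cofibration followed by a trivial
fibration and as a trivial cofibration followed by a fibration. -/
structure ModelStructure (C : Type u) [Category.{v} C]
    [HasFiniteLimits C] [HasFiniteColimits C] where
  W : MorphismProperty C
  Cof : MorphismProperty C
  Fib : MorphismProperty C
  W_comp : ∀ {X Y Z : C} (f : X ⟶ Y) (g : Y ⟶ Z), W f → W g → W (f ≫ g)
  W_of_postcomp : ∀ {X Y Z : C} (f : X ⟶ Y) (g : Y ⟶ Z), W g → W (f ≫ g) → W f
  W_of_precomp : ∀ {X Y Z : C} (f : X ⟶ Y) (g : Y ⟶ Z), W f → W (f ≫ g) → W g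
  W_retract : ∀ {X Y Z W' : C} (f : X ⟶ Y) (g : Z ⟶ W'), IsRetractOf f g → W g → W f
  Cof_retract : ∀ {X Y Z W' : C} (f : X ⟶ Y) (g : Z ⟶ W'), IsRetractOf f g → Cof g → Cof f
  Fib_retract : ∀ {X Y Z W' : C} (f : X ⟶ Y) (g : Z ⟶ W'), IsRetractOf f g → Fib g → Fib f
  lift_cof_trivFib : ∀ {A B X Y : C} (i : A ⟶ B) (p : X ⟶ Y),
    Cof i → Fib p → W p → HasLiftingProperty i p
  lift_trivCof_fib : ∀ {A B X Y : C} (i : A ⟶ B) (p : X ⟶ Y),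
    Cof i → W i → Fib p → HasLiftingProperty i p
  factor_cof_trivFib : ∀ {X Y : C} (f : X ⟶ Y),
    ∃ (Z : C) (i : X ⟶ Z) (p : Z ⟶ Y), Cof i ∧ Fib p ∧ W p ∧ i ≫ p = f
  factor_trivCof_fib : ∀ {X Y : C} (f : X ⟶ Y),
    ∃ (Z : C) (i : X ⟶ Z) (p : Z ⟶ Y), Cof i ∧ W i ∧ Fib p ∧ i ≫ p = f

/-- Two maps `φ ψ : A ⟶ X` are left homotopic if there is a cylinder object for `A`
(an object `Cyl` with `i₀ i₁ : A ⟶ Cyl` and a weak equivalence `p : Cyl ⟶ A` with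
`i₀ ≫ p = i₁ ≫ p = 𝟙 A`) and a homotopy `H : Cyl ⟶ X` from `φ` to `ψ`. -/
def LeftHomotopic {C : Type u} [Category.{v} C]
    [HasFiniteLimits C] [HasFiniteColimits C] (M : ModelStructure C)
    {A X : C} (φ ψ : A ⟶ X) : Prop :=
  ∃ (Cyl : C) (i₀ i₁ : A ⟶ Cyl) (p : Cyl ⟶ A),
    M.W p ∧ i₀ ≫ p = 𝟙 A ∧ i₁ ≫ p = 𝟙 A ∧
    ∃ H : Cyl ⟶ X, i₀ ≫ H = φ ∧ i₁ ≫ H = ψ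

namespace ModelStructure

variable {C : Type u} [Category.{v} C] [HasFiniteLimits C] [HasFiniteColimits C]
variable (M : ModelStructure C)

lemma W_id (X : C) : M.W (𝟙 X) := by
  obtain ⟨Z, i, p, _, hwi, _, fac⟩ := M.factor_trivCof_fib (𝟙 X)
  have h1 : M.W (i ≫ (p ≫ i)) := by
    rw [← Category.assoc, fac, Category.id_comp]; exact hwi
  have h2 : M.W (p ≫ i) := M.W_of_precomp i (p ≫ i) hwi h1
  have h3 : M.W p := M.W_of_postcomp p i hwi h2
  rw [← fac]; exact M.W_comp i p hwi h3

lemma W_of_iso {X Y : C} (e : X ⟶ Y) [IsIso e] : M.W e :=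
  M.W_retract e (𝟙 X) ⟨𝟙 X, 𝟙 X, inv e, e, by simp, by simp, by simp, by simp⟩ (M.W_id X)

lemma cof_of_llp {X Y : C} (i : X ⟶ Y)
    (h : ∀ ⦃U V : C⦄ (p : U ⟶ V), M.Fib p → M.W p → HasLiftingProperty i p) : M.Cof i := by
  obtain ⟨Z, c, t, hc, htf, htw, fac⟩ := M.factor_cof_trivFib i
  haveI := h t htf htw
  have sq : CommSq c i t (𝟙 Y) := ⟨by simp [fac]⟩
  exact M.Cof_retract i c
    ⟨𝟙 X, 𝟙 X, sq.lift, t, by simp, sq.fac_right, by simpa using sq.fac_left.symm,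
      by simpa using fac⟩ hc

lemma tcof_of_llp {X Y : C} (i : X ⟶ Y)
    (h : ∀ ⦃U V : C⦄ (p : U ⟶ V), M.Fib p → HasLiftingProperty i p) : M.Cof i ∧ M.W i := by
  constructor
  · exact M.cof_of_llp i fun U V p hf _ => h p hf
  · obtain ⟨Z, c, t, hc, hcw, htf, fac⟩ := M.factor_trivCof_fib i
    haveI := h t htf
    have sq : CommSq c i t (𝟙 Y) := ⟨by simp [fac]⟩
    exact M.W_retract i c
      ⟨𝟙 X, 𝟙 X, sq.lift, t, by simp, sq.fac_right, by simpa using sq.fac_left.symm,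
        by simpa using fac⟩ hcw

lemma cof_comp {X Y Z : C} (f : X ⟶ Y) (g : Y ⟶ Z) (hf : M.Cof f) (hg : M.Cof g) :
    M.Cof (f ≫ g) := by
  apply M.cof_of_llp
  intro U V p hpf hpw
  haveI := M.lift_cof_trivFib f p hf hpf hpw
  haveI := M.lift_cof_trivFib g p hg hpf hpw
  infer_instance

lemma tcof_comp {X Y Z : C} (f : X ⟶ Y) (g : Y ⟶ Z) (hf : M.Cof f) (hfw : M.W f)
    (hg : M.Cof g) (hgw : M.W g) : M.Cof (f ≫ g) ∧ M.W (f ≫ g) :=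
  ⟨M.cof_comp f g hf hg, M.W_comp f g hfw hgw⟩

lemma cof_of_isPushout {A B X Y : C} {f : A ⟶ X} {g : A ⟶ B} {inl : X ⟶ Y} {inr : B ⟶ Y}
    (h : IsPushout f g inl inr) (hg : M.Cof g) : M.Cof inl := by
  apply M.cof_of_llp
  intro U V p hpf hpw
  haveI := M.lift_cof_trivFib g p hg hpf hpw
  constructor
  intro u v sq
  have sq2 : CommSq (f ≫ u) g p (inr ≫ v) :=
    ⟨by rw [Category.assoc, sq.w, ← Category.assoc, h.w, Category.assoc]⟩
  refine ⟨⟨⟨h.desc u sq2.lift (by rw [sq2.fac_left]), h.inl_desc _ _ _, ?_⟩⟩⟩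
  apply h.hom_ext
  · rw [← Category.assoc, h.inl_desc, sq.w]
  · rw [← Category.assoc, h.inr_desc, sq2.fac_right]

lemma tcof_of_isPushout {A B X Y : C} {f : A ⟶ X} {g : A ⟶ B} {inl : X ⟶ Y} {inr : B ⟶ Y}
    (h : IsPushout f g inl inr) (hg : M.Cof g) (hgw : M.W g) : M.Cof inl ∧ M.W inl := by
  apply M.tcof_of_llp
  intro U V p hpf
  haveI := M.lift_trivCof_fib g p hg hgw hpf
  constructor
  intro u v sq
  have sq2 : CommSq (f ≫ u) g p (inr ≫ v) :=
    ⟨by rw [Category.assoc, sq.w, ← Category.assoc, h.w, Category.assoc]⟩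
  refine ⟨⟨⟨h.desc u sq2.lift (by rw [sq2.fac_left]), h.inl_desc _ _ _, ?_⟩⟩⟩
  apply h.hom_ext
  · rw [← Category.assoc, h.inl_desc, sq.w]
  · rw [← Category.assoc, h.inr_desc, sq2.fac_right]


/-- A pushout (cobase change) of a trivial cofibration, in `pushout.map` form. -/
lemma tcof_pushout_map {E X X' Y : C} (x : E ⟶ X) (x' : E ⟶ X') (ξ : X ⟶ X') (p : E ⟶ Y)
    (hξc : M.Cof ξ) (hξw : M.W ξ) (hx : x ≫ ξ = x') (e₁ : x ≫ ξ = 𝟙 E ≫ x')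
    (e₂ : p ≫ 𝟙 Y = 𝟙 E ≫ p) :
    M.Cof (pushout.map x p x' p ξ (𝟙 Y) (𝟙 E) e₁ e₂) ∧
      M.W (pushout.map x p x' p ξ (𝟙 Y) (𝟙 E) e₁ e₂) := by
  have hinr : pushout.inr x p ≫ pushout.map x p x' p ξ (𝟙 Y) (𝟙 E) e₁ e₂
      = pushout.inr x' p := by simp [pushout.inr_desc]
  have s : IsPushout (x ≫ ξ) p (pushout.inl x' p)
      (pushout.inr x p ≫ pushout.map x p x' p ξ (𝟙 Y) (𝟙 E) e₁ e₂) := by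
    rw [hinr, hx]; exact IsPushout.of_hasPushout x' p
  have t : IsPushout x p (pushout.inl x p) (pushout.inr x p) := IsPushout.of_hasPushout x p
  have sq : IsPushout ξ (pushout.inl x p) (pushout.inl x' p)
      (pushout.map x p x' p ξ (𝟙 Y) (𝟙 E) e₁ e₂) :=
    IsPushout.of_left s (by simp [pushout.inl_desc]) t
  exact M.tcof_of_isPushout sq.flip hξc hξw

/-- Ken Brown's lemma in coslice form: cobase change along any map preserves
weak equivalences between "cofibrant objects of the coslice". -/
lemma KB {E R F Y : C} (ε : E ⟶ R) (m : E ⟶ F) (ρ : R ⟶ F) (hcomp : ε ≫ ρ = m)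
    (hε : M.Cof ε) (hm : M.Cof m) (hρ : M.W ρ) (p : E ⟶ Y)
    (e₁ : ε ≫ ρ = 𝟙 E ≫ m) (e₂ : p ≫ 𝟙 Y = 𝟙 E ≫ p) :
    M.W (pushout.map ε p m p ρ (𝟙 Y) (𝟙 E) e₁ e₂) := by
  -- coproduct of (R, ε) and (F, m) in the coslice
  set N := pushout ε m with hN
  have hδw : ε ≫ ρ = m ≫ 𝟙 F := by rw [hcomp, Category.comp_id]
  set δ : N ⟶ F := pushout.desc ρ (𝟙 F) hδw with hδ
  obtain ⟨V, c, t, hc, htf, htw, fac⟩ := M.factor_cof_trivFib δ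
  set a : R ⟶ V := pushout.inl ε m ≫ c with ha
  set b : F ⟶ V := pushout.inr ε m ≫ c with hb
  have hat : a ≫ t = ρ := by rw [ha, Category.assoc, fac, hδ, pushout.inl_desc]
  have hbt : b ≫ t = 𝟙 F := by rw [hb, Category.assoc, fac, hδ, pushout.inr_desc]
  have hacof : M.Cof a :=
    M.cof_comp _ _ (M.cof_of_isPushout (IsPushout.of_hasPushout ε m) hm) hc
  have hbcof : M.Cof b :=
    M.cof_comp _ _ (M.cof_of_isPushout (IsPushout.of_hasPushout ε m).flip hε) hc
  have haw : M.W a := M.W_of_postcomp a t htw (by rw [hat]; exact hρ)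
  have hbw : M.W b := M.W_of_postcomp b t htw (by rw [hbt]; exact M.W_id F)
  have hmb : m ≫ b = ε ≫ a := by
    rw [ha, hb, ← Category.assoc, ← Category.assoc, pushout.condition]
  -- the three comparison maps between pushouts
  set Φa : pushout ε p ⟶ pushout (ε ≫ a) p :=
    pushout.map ε p (ε ≫ a) p a (𝟙 Y) (𝟙 E) (by simp) (by simp) with hΦa
  set Φb : pushout m p ⟶ pushout (ε ≫ a) p :=
    pushout.map m p (ε ≫ a) p b (𝟙 Y) (𝟙 E) (by rw [hmb]; simp) (by simp) with hΦb
  set Φt : pushout (ε ≫ a) p ⟶ pushout m p :=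
    pushout.map (ε ≫ a) p m p t (𝟙 Y) (𝟙 E)
      (by rw [Category.assoc, hat, hcomp]; simp) (by simp) with hΦt
  have hΦaw : M.W Φa := (M.tcof_pushout_map ε (ε ≫ a) a p hacof haw rfl _ _).2
  have hΦbw : M.W Φb := (M.tcof_pushout_map m (ε ≫ a) b p hbcof hbw hmb _ _).2
  have hbtΦ : Φb ≫ Φt = 𝟙 (pushout m p) := by
    apply pushout.hom_ext
    · rw [hΦb, hΦt, ← Category.assoc, pushout.inl_desc, Category.assoc, pushout.inl_desc,
        ← Category.assoc, hbt]
      simp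
    · simp [hΦb, hΦt, pushout.inr_desc, pushout.inr_desc_assoc]
  have hΦtw : M.W Φt :=
    M.W_of_precomp Φb Φt hΦbw (by rw [hbtΦ]; exact M.W_id _)
  have hfin : Φa ≫ Φt = pushout.map ε p m p ρ (𝟙 Y) (𝟙 E) e₁ e₂ := by
    apply pushout.hom_ext
    · rw [hΦa, hΦt, ← Category.assoc, pushout.inl_desc, Category.assoc, pushout.inl_desc,
        ← Category.assoc, hat, pushout.inl_desc]
    · simp [hΦa, hΦt, pushout.inr_desc, pushout.inr_desc_assoc]
  rw [← hfin]; exact M.W_comp Φa Φt hΦaw hΦtw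


lemma exists_section {E Y : C} (q : E ⟶ Y) (hqf : M.Fib q) (hqw : M.W q)
    (hY : M.Cof (initial.to Y)) : ∃ s : Y ⟶ E, s ≫ q = 𝟙 Y := by
  haveI := M.lift_cof_trivFib (initial.to Y) q hY hqf hqw
  have sq : CommSq (initial.to E) (initial.to Y) q (𝟙 Y) := ⟨initial.hom_ext _ _⟩
  exact ⟨sq.lift, sq.fac_right⟩

/-- If `q` admits a section which is a trivial cofibration, then any cobase change of `q`
along a cofibration is a weak equivalence. -/
lemma W_inl_of_section {E Y F : C} (q : E ⟶ Y) (s : Y ⟶ E) (hsc : M.Cof s) (hsw : M.W s)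
    (hsq : s ≫ q = 𝟙 Y) (m : E ⟶ F) (hm : M.Cof m) : M.W (pushout.inl m q) := by
  -- R := pushout s (s ≫ m); ε : E ⟶ R; σ : F ⟶ R
  set ε : E ⟶ pushout s (s ≫ m) := pushout.inl s (s ≫ m) with hε
  set σ : F ⟶ pushout s (s ≫ m) := pushout.inr s (s ≫ m) with hσ
  have hεc : M.Cof ε :=
    M.cof_of_isPushout (IsPushout.of_hasPushout s (s ≫ m)) (M.cof_comp s m hsc hm)
  obtain ⟨hσc, hσw⟩ := M.tcof_of_isPushout (IsPushout.of_hasPushout s (s ≫ m)).flip hsc hsw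
  set ρ : pushout s (s ≫ m) ⟶ F := pushout.desc m (𝟙 F) (by rw [Category.comp_id]) with hρ
  have hερ : ε ≫ ρ = m := by rw [hε, hρ, pushout.inl_desc]
  have hσρ : σ ≫ ρ = 𝟙 F := by rw [hσ, hρ, pushout.inr_desc]
  have hρw : M.W ρ := M.W_of_precomp σ ρ hσw (by rw [hσρ]; exact M.W_id F)
  set τ : pushout ε q ⟶ pushout m q :=
    pushout.map ε q m q ρ (𝟙 Y) (𝟙 E) (by rw [hερ]; simp) (by simp) with hτ
  have hτw : M.W τ := M.KB ε m ρ hερ hεc hm hρw q _ _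
  -- φ : F ⟶ pushout ε q is an isomorphism, by pasting
  set φ : F ⟶ pushout ε q := σ ≫ pushout.inl ε q with hφ
  have sq1 : IsPushout (s ≫ m) s σ ε := (IsPushout.of_hasPushout s (s ≫ m)).flip
  have sq2 : IsPushout ε q (pushout.inl ε q) (pushout.inr ε q) := IsPushout.of_hasPushout ε q
  have pasted : IsPushout (s ≫ m) (𝟙 Y) φ (pushout.inr ε q) := by
    have h := sq1.paste_vert sq2
    rwa [hsq] at h
  have ht : IsPushout (s ≫ m) (𝟙 Y) (𝟙 F) (s ≫ m) :=
    IsPushout.of_vert_isIso ⟨by simp⟩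
  have hφeq : φ = ht.isoPushout.hom ≫ pasted.isoPushout.inv := by
    rw [Iso.eq_comp_inv, pasted.inl_isoPushout_hom]
    exact ((Category.id_comp _).symm.trans ht.inl_isoPushout_hom).symm
  haveI : IsIso φ := by rw [hφeq]; infer_instance
  have hφτ : φ ≫ τ = pushout.inl m q := by
    rw [hφ, hτ, Category.assoc, pushout.inl_desc, ← Category.assoc, hσρ, Category.id_comp]
  rw [← hφτ]
  exact M.W_comp φ τ (M.W_of_iso φ) hτw

/-- Left properness at cofibrant objects: the cobase change of a weak equivalence
between cofibrant objects along a cofibration is a weak equivalence. -/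
lemma LP {X Y Z : C} (w : X ⟶ Y) (i : X ⟶ Z) (hw : M.W w) (hi : M.Cof i)
    (hX : M.Cof (initial.to X)) (hY : M.Cof (initial.to Y)) : M.W (pushout.inl i w) := by
  -- Ken Brown factorization of w
  set d : pushout (initial.to X) (initial.to Y) ⟶ Y :=
    pushout.desc w (𝟙 Y) (initial.hom_ext _ _) with hd
  obtain ⟨V, c, t, hc, htf, htw, fac⟩ := M.factor_cof_trivFib d
  set j : X ⟶ V := pushout.inl (initial.to X) (initial.to Y) ≫ c with hj
  set s : Y ⟶ V := pushout.inr (initial.to X) (initial.to Y) ≫ c with hs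
  have hjt : j ≫ t = w := by rw [hj, Category.assoc, fac, hd, pushout.inl_desc]
  have hst : s ≫ t = 𝟙 Y := by rw [hs, Category.assoc, fac, hd, pushout.inr_desc]
  have hjcof : M.Cof j := M.cof_comp _ _
    (M.cof_of_isPushout (IsPushout.of_hasPushout (initial.to X) (initial.to Y)) hY) hc
  have hscof : M.Cof s := M.cof_comp _ _
    (M.cof_of_isPushout (IsPushout.of_hasPushout (initial.to X) (initial.to Y)).flip hX) hc
  have hjw : M.W j := M.W_of_postcomp j t htw (by rw [hjt]; exact hw)
  have hsw : M.W s := M.W_of_postcomp s t htw (by rw [hst]; exact M.W_id Y)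
  -- first step : pushout along the trivial cofibration j
  obtain ⟨_, hinl1w⟩ :=
    M.tcof_of_isPushout (IsPushout.of_hasPushout i j) hjcof hjw
  -- second step : pushout along t, which has the trivially cofibrant section s
  have hinr1c : M.Cof (pushout.inr i j) :=
    M.cof_of_isPushout (IsPushout.of_hasPushout i j).flip hi
  have hinl2w : M.W (pushout.inl (pushout.inr i j) t) :=
    M.W_inl_of_section t s hscof hsw hst (pushout.inr i j) hinr1c
  -- pasting: the composite is the cobase change of w along i
  have sq1 : IsPushout j i (pushout.inr i j) (pushout.inl i j) :=
    (IsPushout.of_hasPushout i j).flip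
  have sq2 : IsPushout t (pushout.inr i j) (pushout.inr (pushout.inr i j) t)
      (pushout.inl (pushout.inr i j) t) :=
    (IsPushout.of_hasPushout (pushout.inr i j) t).flip
  have big : IsPushout w i (pushout.inr (pushout.inr i j) t)
      (pushout.inl i j ≫ pushout.inl (pushout.inr i j) t) := by
    have h := sq1.paste_horiz sq2
    rwa [hjt] at h
  have : pushout.inl i w
      = (pushout.inl i j ≫ pushout.inl (pushout.inr i j) t) ≫ big.flip.isoPushout.hom :=
    (big.flip.inl_isoPushout_hom).symm
  rw [this]
  exact M.W_comp _ _ (M.W_comp _ _ hinl1w hinl2w) (M.W_of_iso _)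


/-- The zig-zag relation: existence of a weak equivalence in either direction. -/
abbrev zigrel : C → C → Prop :=
  fun P Q : C => (∃ e : P ⟶ Q, M.W e) ∨ (∃ e : Q ⟶ P, M.W e)

lemma zig {P Q : C} (e : P ⟶ Q) (he : M.W e) : Relation.ReflTransGen M.zigrel P Q :=
  Relation.ReflTransGen.single (Or.inl ⟨e, he⟩)

lemma zag {P Q : C} (e : Q ⟶ P) (he : M.W e) : Relation.ReflTransGen M.zigrel P Q :=
  Relation.ReflTransGen.single (Or.inr ⟨e, he⟩)

/-- Refining the non-cofibration leg of a pushout along a weak equivalence `q`. -/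
lemma W_refine {A B C₀ Cc : C} (f : A ⟶ B) (a : A ⟶ C₀) (q : C₀ ⟶ Cc)
    (hf : M.Cof f) (hq : M.W q)
    (hC₀ : M.Cof (initial.to C₀)) (hCc : M.Cof (initial.to Cc))
    (e₁ : f ≫ 𝟙 B = 𝟙 A ≫ f) (e₂ : a ≫ q = 𝟙 A ≫ (a ≫ q)) :
    M.W (pushout.map f a f (a ≫ q) (𝟙 B) q (𝟙 A) e₁ e₂) := by
  have hinr1c : M.Cof (pushout.inr f a) :=
    M.cof_of_isPushout (IsPushout.of_hasPushout f a).flip hf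
  have hW : M.W (pushout.inl (pushout.inr f a) q) :=
    M.LP q (pushout.inr f a) hq hinr1c hC₀ hCc
  have sq1 : IsPushout a f (pushout.inr f a) (pushout.inl f a) :=
    (IsPushout.of_hasPushout f a).flip
  have sq2 : IsPushout q (pushout.inr f a) (pushout.inr (pushout.inr f a) q)
      (pushout.inl (pushout.inr f a) q) := (IsPushout.of_hasPushout (pushout.inr f a) q).flip
  have big : IsPushout f (a ≫ q) (pushout.inl f a ≫ pushout.inl (pushout.inr f a) q)
      (pushout.inr (pushout.inr f a) q) := (sq1.paste_horiz sq2).flip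
  have heq : pushout.map f a f (a ≫ q) (𝟙 B) q (𝟙 A) e₁ e₂
      = pushout.inl (pushout.inr f a) q ≫ big.isoPushout.hom := by
    apply pushout.hom_ext
    · rw [← Category.assoc, pushout.inl_desc, Category.id_comp]
      exact (big.inl_isoPushout_hom).symm
    · rw [← Category.assoc, pushout.inr_desc, ← sq2.w, Category.assoc,
        big.inr_isoPushout_hom]
  rw [heq]
  exact M.W_comp _ _ hW (M.W_of_iso _)

/-- The strict cube (gluing) lemma, in zig-zag form. -/
lemma cube {A B Cc A' B' Cc' : C} (f : A ⟶ B) (g : A ⟶ Cc) (f' : A' ⟶ B') (g' : A' ⟶ Cc')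
    (u : B ⟶ B') (v : A ⟶ A') (w : Cc ⟶ Cc')
    (hu : M.W u) (hv : M.W v) (hw : M.W w) (hf : M.Cof f) (hf' : M.Cof f')
    (hA : M.Cof (initial.to A)) (hA' : M.Cof (initial.to A'))
    (hCc : M.Cof (initial.to Cc)) (hCc' : M.Cof (initial.to Cc'))
    (scomm1 : f ≫ u = v ≫ f') (scomm2 : g ≫ w = v ≫ g') :
    Relation.ReflTransGen M.zigrel (pushout f g) (pushout f' g') := by
  obtain ⟨C₀, a, qg, hac, hqf, hqw, facg⟩ := M.factor_cof_trivFib g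
  obtain ⟨C₀', a', qg', hac', hqf', hqw', facg'⟩ := M.factor_cof_trivFib g'
  subst facg
  subst facg'
  have hC₀ : M.Cof (initial.to C₀) := by
    rw [show initial.to C₀ = initial.to A ≫ a from initial.hom_ext _ _]
    exact M.cof_comp _ _ hA hac
  have hC₀' : M.Cof (initial.to C₀') := by
    rw [show initial.to C₀' = initial.to A' ≫ a' from initial.hom_ext _ _]
    exact M.cof_comp _ _ hA' hac'
  -- lift the middle comparison for the refined legs
  haveI := M.lift_cof_trivFib a qg' hac hqf' hqw'
  have sql : CommSq (v ≫ a') a qg' (qg ≫ w) := ⟨by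
    simp only [Category.assoc] at scomm2 ⊢
    exact scomm2.symm⟩
  set w₀ : C₀ ⟶ C₀' := sql.lift with hw₀def
  have hw₀l : a ≫ w₀ = v ≫ a' := sql.fac_left
  have hw₀r : w₀ ≫ qg' = qg ≫ w := sql.fac_right
  have hw₀ : M.W w₀ :=
    M.W_of_postcomp w₀ qg' hqw' (by rw [hw₀r]; exact M.W_comp qg w hqw hw)
  -- Edge 1 : pushout f (a ≫ qg) ⇜ pushout f a
  have E1 : Relation.ReflTransGen M.zigrel (pushout f (a ≫ qg)) (pushout f a) :=
    M.zag _ (M.W_refine f a qg hf hqw hC₀ hCc (by simp) (by simp))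
  -- Edge 2 : pushout f a ⟶ Q₂ := pushout k v
  set k : A ⟶ pushout f a := f ≫ pushout.inl f a with hkdef
  have hk : M.Cof k :=
    M.cof_comp f _ hf (M.cof_of_isPushout (IsPushout.of_hasPushout f a) hac)
  have E2 : Relation.ReflTransGen M.zigrel (pushout f a) (pushout k v) :=
    M.zig _ (M.LP v k hv hk hA hA')
  -- Edge 3 : Q₂ ≅ P₂ := pushout f₂ a₂
  set f₂ : A' ⟶ pushout f v := pushout.inr f v with hf₂def
  set a₂ : A' ⟶ pushout a v := pushout.inr a v with ha₂def
  set ψ₁ : pushout f a ⟶ pushout f₂ a₂ :=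
    pushout.map f a f₂ a₂ (pushout.inl f v) (pushout.inl a v) v
      pushout.condition pushout.condition with hψ₁def
  have hθc : k ≫ ψ₁ = v ≫ (f₂ ≫ pushout.inl f₂ a₂) := by
    rw [hkdef, hψ₁def, Category.assoc, pushout.inl_desc, ← Category.assoc,
      pushout.condition, Category.assoc]
  set θ : pushout k v ⟶ pushout f₂ a₂ :=
    pushout.desc ψ₁ (f₂ ≫ pushout.inl f₂ a₂) hθc with hθdef
  have hθBc : f ≫ (pushout.inl f a ≫ pushout.inl k v) = v ≫ pushout.inr k v := by
    rw [← Category.assoc, ← hkdef, pushout.condition]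
  set θB : pushout f v ⟶ pushout k v :=
    pushout.desc (pushout.inl f a ≫ pushout.inl k v) (pushout.inr k v) hθBc with hθBdef
  have hθCc : a ≫ (pushout.inr f a ≫ pushout.inl k v) = v ≫ pushout.inr k v := by
    rw [← Category.assoc, ← pushout.condition, ← hkdef, pushout.condition]
  set θC : pushout a v ⟶ pushout k v :=
    pushout.desc (pushout.inr f a ≫ pushout.inl k v) (pushout.inr k v) hθCc with hθCdef
  have hθ'c : f₂ ≫ θB = a₂ ≫ θC := by
    rw [hf₂def, ha₂def, hθBdef, hθCdef, pushout.inr_desc, pushout.inr_desc]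
  set θ' : pushout f₂ a₂ ⟶ pushout k v := pushout.desc θB θC hθ'c with hθ'def
  have hθθ' : θ ≫ θ' = 𝟙 _ := by
    apply pushout.hom_ext
    · rw [hθdef, ← Category.assoc, pushout.inl_desc, Category.comp_id]
      apply pushout.hom_ext
      · rw [hψ₁def, ← Category.assoc, pushout.inl_desc, Category.assoc, hθ'def,
          pushout.inl_desc, hθBdef, pushout.inl_desc]
      · rw [hψ₁def, ← Category.assoc, pushout.inr_desc, Category.assoc, hθ'def,
          pushout.inr_desc, hθCdef, pushout.inl_desc]
    · rw [hθdef, ← Category.assoc, pushout.inr_desc, Category.comp_id, Category.assoc,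
        hθ'def, pushout.inl_desc, hθBdef, hf₂def, pushout.inr_desc]
  have hθ'θ : θ' ≫ θ = 𝟙 _ := by
    apply pushout.hom_ext
    · rw [hθ'def, ← Category.assoc, pushout.inl_desc, Category.comp_id]
      apply pushout.hom_ext
      · rw [hθBdef, ← Category.assoc, pushout.inl_desc, Category.assoc, hθdef,
          pushout.inl_desc, hψ₁def, pushout.inl_desc]
      · rw [hθBdef, ← Category.assoc, pushout.inr_desc, hθdef, pushout.inr_desc, hf₂def]
    · rw [hθ'def, ← Category.assoc, pushout.inr_desc, Category.comp_id]
      apply pushout.hom_ext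
      · rw [hθCdef, ← Category.assoc, pushout.inl_desc, Category.assoc, hθdef,
          pushout.inl_desc, hψ₁def, pushout.inr_desc]
      · rw [hθCdef, ← Category.assoc, pushout.inr_desc, hθdef, pushout.inr_desc,
          ← pushout.condition]
  haveI : IsIso θ := ⟨⟨θ', hθθ', hθ'θ⟩⟩
  have E3 : Relation.ReflTransGen M.zigrel (pushout k v) (pushout f₂ a₂) :=
    M.zig θ (M.W_of_iso θ)
  -- Edge 4 : change B₂ to B' over A'
  have hu₁c : f ≫ u = v ≫ f' := scomm1
  set u₁ : pushout f v ⟶ B' := pushout.desc u f' hu₁c with hu₁def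
  have hf₂u₁ : f₂ ≫ u₁ = f' := by rw [hf₂def, hu₁def, pushout.inr_desc]
  have hu₁w : M.W u₁ := by
    refine M.W_of_precomp (pushout.inl f v) u₁ (M.LP v f hv hf hA hA') ?_
    rw [hu₁def, pushout.inl_desc]; exact hu
  have hf₂c : M.Cof f₂ := by
    rw [hf₂def]; exact M.cof_of_isPushout (IsPushout.of_hasPushout f v).flip hf
  have E4 : Relation.ReflTransGen M.zigrel (pushout f₂ a₂) (pushout f' a₂) :=
    M.zig _ (M.KB f₂ f' u₁ hf₂u₁ hf₂c hf' hu₁w a₂ (by rw [hf₂u₁]; simp) (by simp))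
  -- Edge 5 : change C₂ to C₀' over A'
  set w₁ : pushout a v ⟶ C₀' := pushout.desc w₀ a' hw₀l with hw₁def
  have ha₂w₁ : a₂ ≫ w₁ = a' := by rw [ha₂def, hw₁def, pushout.inr_desc]
  have hw₁w : M.W w₁ := by
    refine M.W_of_precomp (pushout.inl a v) w₁ (M.LP v a hv hac hA hA') ?_
    rw [hw₁def, pushout.inl_desc]; exact hw₀
  have ha₂c : M.Cof a₂ := by
    rw [ha₂def]; exact M.cof_of_isPushout (IsPushout.of_hasPushout a v).flip hac
  have hKB5 : M.W (pushout.map a₂ f' a' f' w₁ (𝟙 B') (𝟙 A')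
      (by rw [ha₂w₁]; simp) (by simp)) :=
    M.KB a₂ a' w₁ ha₂w₁ ha₂c hac' hw₁w f' _ _
  set τC : pushout f' a₂ ⟶ pushout f' a' :=
    pushout.map f' a₂ f' a' (𝟙 B') w₁ (𝟙 A') (by simp) (by rw [ha₂w₁]; simp) with hτCdef
  have hconj : τC = (pushoutSymmetry f' a₂).hom
      ≫ pushout.map a₂ f' a' f' w₁ (𝟙 B') (𝟙 A') (by rw [ha₂w₁]; simp) (by simp)
      ≫ (pushoutSymmetry f' a').inv := by
    apply pushout.hom_ext <;> simp [hτCdef, pushout.inl_desc, pushout.inr_desc, pushout.inl_desc_assoc, pushout.inr_desc_assoc]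
  have E5 : Relation.ReflTransGen M.zigrel (pushout f' a₂) (pushout f' a') := by
    refine M.zig τC ?_
    rw [hconj]
    exact M.W_comp _ _ (M.W_of_iso _) (M.W_comp _ _ hKB5 (M.W_of_iso _))
  -- Edge 6 : refine back on the primed side
  have E6 : Relation.ReflTransGen M.zigrel (pushout f' a') (pushout f' (a' ≫ qg')) :=
    M.zig _ (M.W_refine f' a' qg' hf' hqw' hC₀' hCc' (by simp) (by simp))
  exact ((((E1.trans E2).trans E3).trans E4).trans E5).trans E6


/-- Improving an arbitrary left homotopy to one on a good cylinder. -/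
lemma good_cylinder {A X : C} (φ ψ : A ⟶ X) (h : LeftHomotopic M φ ψ)
    (hA : M.Cof (initial.to A)) :
    ∃ (Cy : C) (i₀ i₁ : A ⟶ Cy) (p : Cy ⟶ A) (H : Cy ⟶ X),
      M.Cof i₀ ∧ M.W i₀ ∧ M.Cof i₁ ∧ M.W p ∧
      i₀ ≫ p = 𝟙 A ∧ i₁ ≫ p = 𝟙 A ∧ i₀ ≫ H = φ ∧ i₁ ≫ H = ψ := by
  obtain ⟨Cy0, j₀, j₁, p0, hp0, e0, e1, H0, h0, h1⟩ := h
  set d : pushout (initial.to A) (initial.to A) ⟶ Cy0 :=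
    pushout.desc j₀ j₁ (initial.hom_ext _ _) with hd
  obtain ⟨Cy, c, t, hc, htf, htw, fac⟩ := M.factor_cof_trivFib d
  have hinlc : M.Cof (pushout.inl (initial.to A) (initial.to A)) :=
    M.cof_of_isPushout (IsPushout.of_hasPushout _ _) hA
  have hinrc : M.Cof (pushout.inr (initial.to A) (initial.to A)) :=
    M.cof_of_isPushout (IsPushout.of_hasPushout _ _).flip hA
  have he0 : (pushout.inl (initial.to A) (initial.to A) ≫ c) ≫ t ≫ p0 = 𝟙 A := by
    rw [Category.assoc, ← Category.assoc c t, fac, hd, ← Category.assoc,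
      pushout.inl_desc, e0]
  have he1 : (pushout.inr (initial.to A) (initial.to A) ≫ c) ≫ t ≫ p0 = 𝟙 A := by
    rw [Category.assoc, ← Category.assoc c t, fac, hd, ← Category.assoc,
      pushout.inr_desc, e1]
  have hpw : M.W (t ≫ p0) := M.W_comp t p0 htw hp0
  refine ⟨Cy, pushout.inl _ _ ≫ c, pushout.inr _ _ ≫ c, t ≫ p0, t ≫ H0,
    M.cof_comp _ _ hinlc hc,
    M.W_of_postcomp _ _ hpw (by rw [he0]; exact M.W_id A),
    M.cof_comp _ _ hinrc hc, hpw, he0, he1, ?_, ?_⟩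
  · rw [Category.assoc, ← Category.assoc c t, fac, hd, ← Category.assoc,
      pushout.inl_desc, h0]
  · rw [Category.assoc, ← Category.assoc c t, fac, hd, ← Category.assoc,
      pushout.inr_desc, h1]

lemma zigrel_symm : Symmetric M.zigrel := fun _ _ h => h.symm

end ModelStructure

open ModelStructure in
/-- Given spans `B ←f- A -g→ C` and `B′ ←f′- A′ -g′→ C′` in a model
category, weak equivalences `u, v, w` between cofibrant objects as below, where `f`
and `f′` are cofibrations, `u ∘ f` left homotopic to `f′ ∘ v` and `w ∘ g` left
homotopic to `g′ ∘ v`, the pushouts `B ⨿_A C` and `B′ ⨿_{A′} C′` are connected by a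
zig-zag of weak equivalences; in particular they become isomorphic in the localization
at the weak equivalences. -/
theorem pushout_zigzag_of_homotopy_commutative
    {C : Type u} [Category.{v} C] [HasFiniteLimits C] [HasFiniteColimits C]
    (M : ModelStructure C)
    {A B C' A' B' C'' : C} (f : A ⟶ B) (g : A ⟶ C') (f' : A' ⟶ B') (g' : A' ⟶ C'')
    (u : B ⟶ B') (v : A ⟶ A') (w : C' ⟶ C'')
    (hu : M.W u) (hv : M.W v) (hw : M.W w)
    (hA : M.Cof (initial.to A)) (hB : M.Cof (initial.to B)) (hC : M.Cof (initial.to C'))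
    (hA' : M.Cof (initial.to A')) (hB' : M.Cof (initial.to B'))
    (hC' : M.Cof (initial.to C''))
    (hf : M.Cof f) (hf' : M.Cof f')
    (h1 : LeftHomotopic M (f ≫ u) (v ≫ f'))
    (h2 : LeftHomotopic M (g ≫ w) (v ≫ g')) :
    Relation.ReflTransGen
      (fun P Q : C => (∃ e : P ⟶ Q, M.W e) ∨ (∃ e : Q ⟶ P, M.W e))
      (pushout f g) (pushout f' g') ∧
    Nonempty (M.W.Q.obj (pushout f g) ≅ M.W.Q.obj (pushout f' g')) := by
  obtain ⟨Cy1, i₀, i₁, p₁, H₁, hi₀c, hi₀w, hi₁c, hp₁w, he₀, he₁, hH₀, hH₁⟩ :=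
    M.good_cylinder (f ≫ u) (v ≫ f') h1 hA
  obtain ⟨Cy2, j₀, j₁, p₂, H₂, hj₀c, hj₀w, hj₁c, hp₂w, hf₀, hf₁, hK₀, hK₁⟩ :=
    M.good_cylinder (g ≫ w) (v ≫ g') h2 hA
  -- the mapping cylinder `B̃ = pushout f i₀` of the `B`-side homotopy
  obtain ⟨hιc, hιw⟩ := M.tcof_of_isPushout (IsPushout.of_hasPushout f i₀) hi₀c hi₀w
  have hjCc : M.Cof (pushout.inr f i₀) :=
    M.cof_of_isPushout (IsPushout.of_hasPushout f i₀).flip hf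
  set ft : A ⟶ pushout f i₀ := i₁ ≫ pushout.inr f i₀ with hftdef
  have hftc : M.Cof ft := M.cof_comp _ _ hi₁c hjCc
  set ut : pushout f i₀ ⟶ B' := pushout.desc u H₁ hH₀.symm with hutdef
  have hutw : M.W ut := M.W_of_precomp (pushout.inl f i₀) ut hιw
    (by rw [hutdef, pushout.inl_desc]; exact hu)
  have hftu : ft ≫ ut = v ≫ f' := by
    rw [hftdef, hutdef, Category.assoc, pushout.inr_desc]; exact hH₁
  set rB : pushout f i₀ ⟶ B := pushout.desc (𝟙 B) (p₁ ≫ f)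
    (by rw [Category.comp_id, ← Category.assoc, he₀, Category.id_comp]) with hrBdef
  have hrBw : M.W rB := M.W_of_precomp (pushout.inl f i₀) rB hιw
    (by rw [hrBdef, pushout.inl_desc]; exact M.W_id B)
  have hftr : ft ≫ rB = f := by
    rw [hftdef, hrBdef, Category.assoc, pushout.inr_desc, ← Category.assoc, he₁,
      Category.id_comp]
  have hBt : M.Cof (initial.to (pushout f i₀)) := by
    rw [show initial.to _ = initial.to B ≫ pushout.inl f i₀ from initial.hom_ext _ _]
    exact M.cof_comp _ _ hB hιc
  -- the mapping cylinder `C̃ = pushout g j₀` of the `C`-side homotopy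
  obtain ⟨hιCc, hιCw⟩ := M.tcof_of_isPushout (IsPushout.of_hasPushout g j₀) hj₀c hj₀w
  set gt : A ⟶ pushout g j₀ := j₁ ≫ pushout.inr g j₀ with hgtdef
  set wt : pushout g j₀ ⟶ C'' := pushout.desc w H₂ hK₀.symm with hwtdef
  have hwtw : M.W wt := M.W_of_precomp (pushout.inl g j₀) wt hιCw
    (by rw [hwtdef, pushout.inl_desc]; exact hw)
  have hgtw : gt ≫ wt = v ≫ g' := by
    rw [hgtdef, hwtdef, Category.assoc, pushout.inr_desc]; exact hK₁
  set rC : pushout g j₀ ⟶ C' := pushout.desc (𝟙 C') (p₂ ≫ g)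
    (by rw [Category.comp_id, ← Category.assoc, hf₀, Category.id_comp]) with hrCdef
  have hrCw : M.W rC := M.W_of_precomp (pushout.inl g j₀) rC hιCw
    (by rw [hrCdef, pushout.inl_desc]; exact M.W_id C')
  have hgtr : gt ≫ rC = g := by
    rw [hgtdef, hrCdef, Category.assoc, pushout.inr_desc, ← Category.assoc, hf₁,
      Category.id_comp]
  have hCt : M.Cof (initial.to (pushout g j₀)) := by
    rw [show initial.to _ = initial.to C' ≫ pushout.inl g j₀ from initial.hom_ext _ _]
    exact M.cof_comp _ _ hC hιCc
  -- the two strict cubes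
  have cube1 := M.cube ft gt f g rB (𝟙 A) rC hrBw (M.W_id A) hrCw hftc hf hA hA hCt hC
    (by rw [hftr, Category.id_comp]) (by rw [hgtr, Category.id_comp])
  have cube2 := M.cube ft gt f' g' ut v wt hutw hv hwtw hftc hf' hA hA' hCt hC'
    hftu hgtw
  have hz : Relation.ReflTransGen M.zigrel (pushout f g) (pushout f' g') :=
    ((@Relation.ReflTransGen.stdSymm _ M.zigrel ⟨fun _ _ h => M.zigrel_symm h⟩).symm _ _ cube1).trans cube2
  refine ⟨hz, ?_⟩
  have loc : ∀ {P Q : C}, Relation.ReflTransGen M.zigrel P Q →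
      Nonempty (M.W.Q.obj P ≅ M.W.Q.obj Q) := by
    intro P Q h
    induction h with
    | refl => exact ⟨Iso.refl _⟩
    | tail _ hstep ih =>
      obtain ⟨i⟩ := ih
      rcases hstep with ⟨e, he⟩ | ⟨e, he⟩
      · exact ⟨i.trans (Localization.isoOfHom M.W.Q M.W e he)⟩
      · exact ⟨i.trans (Localization.isoOfHom M.W.Q M.W e he).symm⟩
  exact loc hz
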